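/- Let Λ = (α, λ, f) and Λ' = (α', λ', f') be equivalent twisted S-module structures on a semilattice of abelian groups A, with equivalence given by g : S → A, g(s) ∈ A_{α(s s⁻¹)}. Then the map μ : A ∗_Λ S → A ∗_{Λ'} S defined by μ(a δ_s) = a g(s)⁻¹ δ'_s is an isomorphism making the crossed products equivalent as extensions of A by S. -/
import Mathlib


/-- An inverse semigroup: every element has a unique (generalized) inverse. -/
class InverseSemigroup (S : Type*) extends Semigroup S, Inv S where
  mul_inv_mul : ∀ a : S, a * a⁻¹ * a = a
  inv_mul_inv : ∀ a : S, a⁻¹ * a * a⁻¹ = a⁻¹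
  inv_unique : ∀ a b : S, a * b * a = a → b * a * b = b → b = a⁻¹

/-- `e` is an idempotent. -/
def IsIdem {S : Type*} [Mul S] (e : S) : Prop := e * e = e

/-- The natural partial order on an inverse semigroup: `a ≤ b` iff `a = e * b`
for some idempotent `e`. -/
def NatLe {S : Type*} [Mul S] (a b : S) : Prop := ∃ e, IsIdem e ∧ a = e * b

/-- A twisted `S`-module structure `Λ = (α, λ, f)` on a semilattice of abelian
groups `A` (a commutative inverse semigroup). -/
structure TwSMod (S A : Type*) [InverseSemigroup S] [InverseSemigroup A] where
  α : S → A
  lam : S → A → A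
  f : S → S → A
  α_idem : ∀ e : S, IsIdem e → IsIdem (α e)
  α_mul : ∀ e e' : S, IsIdem e → IsIdem e' → α (e * e') = α e * α e'
  α_inj : ∀ e e' : S, IsIdem e → IsIdem e' → α e = α e' → e = e'
  α_surj : ∀ g : A, IsIdem g → ∃ e : S, IsIdem e ∧ α e = g
  lam_mul : ∀ (s : S) (a b : A), lam s (a * b) = lam s a * lam s b
  lam_idem : ∀ e : S, IsIdem e → ∀ a : A, lam e a = α e * a
  lam_alpha : ∀ (s e : S), IsIdem e → lam s (α e) = α (s * e * s⁻¹)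
  lam_twcomp : ∀ (s t : S) (a : A),
    lam s (lam t a) = f s t * lam (s * t) a * (f s t)⁻¹
  f_mem : ∀ s t : S, f s t * (f s t)⁻¹ = α (s * t * t⁻¹ * s⁻¹)
  f_norm1 : ∀ (s e : S), IsIdem e → f (s * e) e = α (s * e * s⁻¹)
  f_norm2 : ∀ (s e : S), IsIdem e → f e (e * s) = α (e * s * s⁻¹)
  f_coc : ∀ s t u : S, lam s (f t u) * f s (t * u) = f s t * f (s * t) u

/-- Multiplication of the crossed product `A ∗_Λ S`:
`aδ_s · bδ_t = a λ_s(b) f(s,t) δ_{st}`. -/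
def tmul {S A : Type*} [InverseSemigroup S] [InverseSemigroup A]
    (M : TwSMod S A) (p q : A × S) : A × S :=
  (p.1 * M.lam p.2 q.1 * M.f p.2 q.2, p.2 * q.2)

/-- The carrier of `A ∗_Λ S`: pairs `aδ_s` with `a a⁻¹ = α(s s⁻¹)`. -/
def tcarrier {S A : Type*} [InverseSemigroup S] [InverseSemigroup A]
    (M : TwSMod S A) : Set (A × S) :=
  {p | p.1 * p.1⁻¹ = M.α (p.2 * p.2⁻¹)}

namespace ISG
variable {T : Type*} [InverseSemigroup T]

open InverseSemigroup

lemma inv_inv' (a : T) : a⁻¹⁻¹ = a :=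
  (inv_unique a⁻¹ a (inv_mul_inv a) (mul_inv_mul a)).symm

lemma idem_inv {e : T} (he : IsIdem e) : e⁻¹ = e :=
  (inv_unique e e (by rw [he, he]) (by rw [he, he])).symm

lemma idem_mul_inv (a : T) : IsIdem (a * a⁻¹) := by
  show _ = _
  rw [mul_assoc, ← mul_assoc a⁻¹, inv_mul_inv]

lemma idem_inv_mul (a : T) : IsIdem (a⁻¹ * a) := by
  show _ = _
  rw [mul_assoc, ← mul_assoc a, mul_inv_mul]

lemma idem_mul_idem {e f : T} (he : IsIdem e) (hf : IsIdem f) : IsIdem (e * f) := by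
  have he1 : ∀ z : T, e * (e * z) = e * z := fun z => by rw [← mul_assoc, he]
  have hf1 : ∀ z : T, f * (f * z) = f * z := fun z => by rw [← mul_assoc, hf]
  set x := (e * f)⁻¹ with hxdef
  have h1 : e * (f * (x * (e * f))) = e * f := by
    have := mul_inv_mul (e * f); simpa [mul_assoc] using this
  have h2 : ∀ z : T, x * (e * (f * (x * z))) = x * z := fun z => by
    have := congrArg (· * z) (inv_mul_inv (e * f))
    simpa [mul_assoc] using this
  have h3 : (e * f) * (f * x * e) * (e * f) = e * f := by
    simp only [mul_assoc, he1, hf1]; exact h1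
  have h4 : (f * x * e) * (e * f) * (f * x * e) = f * x * e := by
    simp only [mul_assoc, he1, hf1]; rw [h2 e]
  have hx : f * x * e = x := inv_unique (e * f) (f * x * e) h3 h4
  have hxx : IsIdem x := by
    show x * x = x
    conv_lhs => rw [← hx]
    calc (f * x * e) * (f * x * e) = f * (x * (e * (f * (x * e)))) := by
          simp only [mul_assoc]
      _ = f * (x * e) := by rw [h2 e]
      _ = x := by rw [← mul_assoc, hx]
  have hef : e * f = x := (inv_inv' (e * f)).symm.trans (idem_inv hxx)
  show e * f * (e * f) = e * f
  rw [hef, hxx]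

lemma idem_comm {e f : T} (he : IsIdem e) (hf : IsIdem f) : f * e = e * f := by
  have he1 : ∀ z : T, e * (e * z) = e * z := fun z => by rw [← mul_assoc, he]
  have hf1 : ∀ z : T, f * (f * z) = f * z := fun z => by rw [← mul_assoc, hf]
  have hef := idem_mul_idem he hf
  have hfe := idem_mul_idem hf he
  have h3 : (e * f) * (f * e) * (e * f) = e * f := by
    simp only [mul_assoc, he1, hf1]
    have := hef; simpa [IsIdem, mul_assoc] using this
  have h4 : (f * e) * (e * f) * (f * e) = f * e := by
    simp only [mul_assoc, he1, hf1]
    have := hfe; simpa [IsIdem, mul_assoc] using this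
  calc f * e = (e * f)⁻¹ := inv_unique (e * f) (f * e) h3 h4
    _ = e * f := idem_inv hef

lemma mul_inv_rev' (s t : T) : (s * t)⁻¹ = t⁻¹ * s⁻¹ := by
  have c1 : (t * t⁻¹) * (s⁻¹ * s) = (s⁻¹ * s) * (t * t⁻¹) :=
    idem_comm (idem_inv_mul s) (idem_mul_inv t)
  have h3 : (s * t) * (t⁻¹ * s⁻¹) * (s * t) = s * t := by
    calc (s * t) * (t⁻¹ * s⁻¹) * (s * t)
        = s * ((t * t⁻¹) * (s⁻¹ * s) * t) := by simp only [mul_assoc]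
      _ = s * ((s⁻¹ * s) * (t * t⁻¹) * t) := by rw [c1]
      _ = (s * s⁻¹ * s) * (t * t⁻¹ * t) := by simp only [mul_assoc]
      _ = s * t := by rw [mul_inv_mul, mul_inv_mul]
  have h4 : (t⁻¹ * s⁻¹) * (s * t) * (t⁻¹ * s⁻¹) = t⁻¹ * s⁻¹ := by
    calc (t⁻¹ * s⁻¹) * (s * t) * (t⁻¹ * s⁻¹)
        = t⁻¹ * ((s⁻¹ * s) * (t * t⁻¹) * s⁻¹) := by simp only [mul_assoc]
      _ = t⁻¹ * ((t * t⁻¹) * (s⁻¹ * s) * s⁻¹) := by rw [← c1]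
      _ = (t⁻¹ * t * t⁻¹) * (s⁻¹ * s * s⁻¹) := by simp only [mul_assoc]
      _ = t⁻¹ * s⁻¹ := by rw [inv_mul_inv, inv_mul_inv]
  exact (inv_unique (s * t) (t⁻¹ * s⁻¹) h3 h4).symm

lemma conj_idem (s : T) {e : T} (he : IsIdem e) : IsIdem (s * e * s⁻¹) := by
  have c1 : e * (s⁻¹ * s) = (s⁻¹ * s) * e := idem_comm (idem_inv_mul s) he
  show s * e * s⁻¹ * (s * e * s⁻¹) = s * e * s⁻¹
  calc s * e * s⁻¹ * (s * e * s⁻¹)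
      = s * (e * (s⁻¹ * s) * (e * s⁻¹)) := by simp only [mul_assoc]
    _ = s * ((s⁻¹ * s) * e * (e * s⁻¹)) := by rw [c1]
    _ = (s * s⁻¹ * s) * ((e * e) * s⁻¹) := by simp only [mul_assoc]
    _ = s * e * s⁻¹ := by rw [mul_inv_mul, he, mul_assoc]

end ISG

open ISG InverseSemigroup in
/-- If `Λ` and `Λ'` are equivalent twisted `S`-module structures on `A` (via
`g : S → A`), then `μ(aδ_s) = a g(s)⁻¹ δ'_s` is an isomorphism
`A ∗_Λ S → A ∗_{Λ'} S` of extensions of `A` by `S`: it maps the carrier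
bijectively to the carrier, is a homomorphism, fixes `i(A)` (i.e. commutes with
`i` and `i'`), and commutes with the projections to `S`. -/
theorem stmt13 {S A : Type*} [InverseSemigroup S] [InverseSemigroup A]
    (hA : ∀ a b : A, a * b = b * a) (M M' : TwSMod S A) (g : S → A)
    (hg : ∀ s : S, g s * (g s)⁻¹ = M.α (s * s⁻¹))
    (hα : ∀ e : S, IsIdem e → M'.α e = M.α e)
    (hlam : ∀ (s : S) (a : A), M'.lam s a = g s * M.lam s a * (g s)⁻¹)
    (hf : ∀ s t : S, M'.f s t * g (s * t) = g s * M.lam s (g t) * M.f s t) :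
    (∀ p ∈ tcarrier M, ((p.1 * (g p.2)⁻¹, p.2) : A × S) ∈ tcarrier M') ∧
    (∀ p ∈ tcarrier M, ∀ q ∈ tcarrier M,
      (((tmul M p q).1 * (g (tmul M p q).2)⁻¹, (tmul M p q).2) : A × S)
        = tmul M' (p.1 * (g p.2)⁻¹, p.2) (q.1 * (g q.2)⁻¹, q.2)) ∧
    Set.BijOn (fun p : A × S => ((p.1 * (g p.2)⁻¹, p.2) : A × S))
      (tcarrier M) (tcarrier M') ∧
    (∀ (a : A) (e : S), IsIdem e → a * a⁻¹ = M.α e →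
      ((a * (g e)⁻¹, e) : A × S) = (a, e)) := by
  haveI : Std.Commutative (α := A) (· * ·) := ⟨hA⟩
  haveI : Std.Associative (α := A) (· * ·) := ⟨mul_assoc⟩
  -- λ_s preserves inverses
  have lam_inv : ∀ (s : S) (x : A), M.lam s x⁻¹ = (M.lam s x)⁻¹ := fun s x =>
    inv_unique (M.lam s x) (M.lam s x⁻¹)
      (by rw [← M.lam_mul, ← M.lam_mul, mul_inv_mul])
      (by rw [← M.lam_mul, ← M.lam_mul, inv_mul_inv])
  -- absorption lemmas in the commutative inverse semigroup A
  have abs : ∀ x y : A, x * x⁻¹ = y → x * y = x := fun x y h => by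
    rw [← h, hA x x⁻¹, ← mul_assoc, mul_inv_mul]
  have absI : ∀ x y : A, x * x⁻¹ = y → x⁻¹ * y = x⁻¹ := fun x y h => by
    rw [← h, ← mul_assoc, inv_mul_inv]
  -- a cancellation helper: a ∈ carrier ⟹ a * ((g s)⁻¹ * g s) = a
  have habs : ∀ (a : A) (s : S), a * a⁻¹ = M.α (s * s⁻¹) →
      a * ((g s)⁻¹ * g s) = a := fun a s ha => by
    rw [hA (g s)⁻¹, hg s, ← ha]
    exact abs a _ rfl
  -- the value of g(st) (g(st))⁻¹
  have Fgst : ∀ s t : S, g (s * t) * (g (s * t))⁻¹ = M.α (s * (t * t⁻¹) * s⁻¹) := by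
    intro s t
    rw [hg (s * t)]
    congr 1
    rw [mul_inv_rev']
    simp only [mul_assoc]
  have hSeq : ∀ s t : S, s * t * t⁻¹ * s⁻¹ = s * (t * t⁻¹) * s⁻¹ := fun s t => by
    simp only [mul_assoc]
  have hidem : ∀ s t : S, IsIdem (s * (t * t⁻¹) * s⁻¹) := fun s t =>
    conj_idem s (idem_mul_inv t)
  -- goal 1: maps carrier to carrier
  have mapsto : ∀ p ∈ tcarrier M, ((p.1 * (g p.2)⁻¹, p.2) : A × S) ∈ tcarrier M' := by
    rintro ⟨a, s⟩ hp
    have ha : a * a⁻¹ = M.α (s * s⁻¹) := hp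
    show (a * (g s)⁻¹) * (a * (g s)⁻¹)⁻¹ = M'.α (s * s⁻¹)
    rw [hα _ (idem_mul_inv s), mul_inv_rev', inv_inv']
    calc (a * (g s)⁻¹) * (g s * a⁻¹)
        = (a * a⁻¹) * (g s * (g s)⁻¹) := by ac_rfl
      _ = M.α (s * s⁻¹) * M.α (s * s⁻¹) := by rw [ha, hg s]
      _ = M.α (s * s⁻¹) := M.α_idem _ (idem_mul_inv s)
  -- goal 2: homomorphism
  have hom : ∀ p ∈ tcarrier M, ∀ q ∈ tcarrier M,
      (((tmul M p q).1 * (g (tmul M p q).2)⁻¹, (tmul M p q).2) : A × S)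
        = tmul M' (p.1 * (g p.2)⁻¹, p.2) (q.1 * (g q.2)⁻¹, q.2) := by
    rintro ⟨a, s⟩ hp ⟨b, t⟩ hq
    have ha : a * a⁻¹ = M.α (s * s⁻¹) := hp
    have hb : b * b⁻¹ = M.α (t * t⁻¹) := hq
    simp only [tmul]
    refine Prod.ext ?_ rfl
    show (a * M.lam s b * M.f s t) * (g (s * t))⁻¹
        = (a * (g s)⁻¹) * M'.lam s (b * (g t)⁻¹) * M'.f s t
    have hcc : M'.f s t * (M'.f s t)⁻¹ = g (s * t) * (g (s * t))⁻¹ := by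
      calc M'.f s t * (M'.f s t)⁻¹ = M'.α (s * t * t⁻¹ * s⁻¹) := M'.f_mem s t
        _ = M.α (s * (t * t⁻¹) * s⁻¹) := by rw [hSeq s t]; exact hα _ (hidem s t)
        _ = g (s * t) * (g (s * t))⁻¹ := (Fgst s t).symm
    have key1 : M'.f s t = g s * M.lam s (g t) * M.f s t * (g (s * t))⁻¹ := by
      calc M'.f s t = M'.f s t * (g (s * t) * (g (s * t))⁻¹) := (abs _ _ hcc).symm
        _ = (M'.f s t * g (s * t)) * (g (s * t))⁻¹ := by rw [mul_assoc]
        _ = g s * M.lam s (g t) * M.f s t * (g (s * t))⁻¹ := by rw [hf s t]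
    have E2 : (M.lam s (g t))⁻¹ * M.lam s (g t) = g (s * t) * (g (s * t))⁻¹ := by
      calc (M.lam s (g t))⁻¹ * M.lam s (g t)
          = M.lam s (g t) * (M.lam s (g t))⁻¹ := hA _ _
        _ = M.lam s (g t * (g t)⁻¹) := by rw [M.lam_mul, lam_inv]
        _ = M.lam s (M.α (t * t⁻¹)) := by rw [hg t]
        _ = M.α (s * (t * t⁻¹) * s⁻¹) := M.lam_alpha s (t * t⁻¹) (idem_mul_inv t)
        _ = g (s * t) * (g (s * t))⁻¹ := (Fgst s t).symm
    have h1 : a * ((g s)⁻¹ * g s) = a := habs a s ha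
    have h2 : (g (s * t))⁻¹ * ((M.lam s (g t))⁻¹ * M.lam s (g t)) = (g (s * t))⁻¹ := by
      rw [E2]; exact absI _ _ rfl
    symm
    calc (a * (g s)⁻¹) * M'.lam s (b * (g t)⁻¹) * M'.f s t
        = (a * (g s)⁻¹) * (g s * (M.lam s b * (M.lam s (g t))⁻¹) * (g s)⁻¹) *
            (g s * M.lam s (g t) * M.f s t * (g (s * t))⁻¹) := by
          rw [hlam, M.lam_mul, lam_inv, key1]
      _ = ((a * ((g s)⁻¹ * g s)) * ((g s)⁻¹ * g s)) * M.lam s b * M.f s t *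
            ((g (s * t))⁻¹ * ((M.lam s (g t))⁻¹ * M.lam s (g t))) := by ac_rfl
      _ = (a * M.lam s b * M.f s t) * (g (s * t))⁻¹ := by
          rw [h1, h1, h2]
  refine ⟨mapsto, hom, ⟨?_, ?_, ?_⟩, ?_⟩
  · -- MapsTo
    intro p hp
    exact mapsto p hp
  · -- InjOn
    rintro ⟨a, s⟩ hp ⟨b, t⟩ hq h
    have ha : a * a⁻¹ = M.α (s * s⁻¹) := hp
    have hb : b * b⁻¹ = M.α (t * t⁻¹) := hq
    simp only [Prod.mk.injEq] at h
    obtain ⟨h1, h2⟩ := h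
    subst h2
    refine Prod.ext ?_ rfl
    show a = b
    calc a = a * ((g s)⁻¹ * g s) := (habs a s ha).symm
      _ = (a * (g s)⁻¹) * g s := (mul_assoc _ _ _).symm
      _ = (b * (g s)⁻¹) * g s := by rw [h1]
      _ = b * ((g s)⁻¹ * g s) := mul_assoc _ _ _
      _ = b := habs b s hb
  · -- SurjOn
    rintro ⟨b, t⟩ hp
    have hb : b * b⁻¹ = M.α (t * t⁻¹) :=
      (show b * b⁻¹ = M'.α (t * t⁻¹) from hp).trans (hα _ (idem_mul_inv t))
    refine ⟨(b * g t, t), ?_, ?_⟩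
    · show (b * g t) * (b * g t)⁻¹ = M.α (t * t⁻¹)
      rw [mul_inv_rev']
      calc (b * g t) * ((g t)⁻¹ * b⁻¹)
          = (b * b⁻¹) * (g t * (g t)⁻¹) := by ac_rfl
        _ = M.α (t * t⁻¹) * M.α (t * t⁻¹) := by rw [hb, hg t]
        _ = M.α (t * t⁻¹) := M.α_idem _ (idem_mul_inv t)
    · show ((b * g t) * (g t)⁻¹, t) = (b, t)
      refine Prod.ext ?_ rfl
      show (b * g t) * (g t)⁻¹ = b
      calc (b * g t) * (g t)⁻¹ = b * (g t * (g t)⁻¹) := mul_assoc _ _ _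
        _ = b * (b * b⁻¹) := by rw [hg t, ← hb]
        _ = b := abs b _ rfl
  · -- fixes i(A)
    intro a e he ha
    have hee : e * e⁻¹ = e := by rw [idem_inv he, he]
    have hGE : g e * (g e)⁻¹ = M.α e := by rw [hg e, hee]
    have hEidem : M.α e * M.α e = M.α e := M.α_idem e he
    have Mfee : M.f e e = M.α e := by
      have h := M.f_norm1 e e he
      rw [he] at h
      rw [idem_inv he] at h
      rw [he] at h
      exact h
    have M'fee : M'.f e e = M.α e := by
      have h := M'.f_norm1 e e he
      rw [he] at h
      rw [idem_inv he] at h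
      rw [he] at h
      exact h.trans (hα e he)
    have hrel : M.α e * g e = g e * (M.α e * g e) * M.α e := by
      have h := hf e e
      rw [he, M'fee, Mfee, M.lam_idem e he] at h
      exact h
    have h6 : M.α e * g e * (g e)⁻¹ = M.α e := by rw [mul_assoc, hGE, hEidem]
    have h7 : g e * (M.α e * g e) * M.α e * (g e)⁻¹ = g e * M.α e := by
      calc g e * (M.α e * g e) * M.α e * (g e)⁻¹
          = (g e * (g e * (g e)⁻¹)) * (M.α e * M.α e) := by ac_rfl
        _ = (g e * M.α e) * M.α e := by rw [hGE, hEidem]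
        _ = g e * (M.α e * M.α e) := mul_assoc _ _ _
        _ = g e * M.α e := by rw [hEidem]
    have EG : g e * M.α e = M.α e := by
      calc g e * M.α e = g e * (M.α e * g e) * M.α e * (g e)⁻¹ := h7.symm
        _ = (M.α e * g e) * (g e)⁻¹ := by rw [← hrel]
        _ = M.α e := h6
    have hEi : (M.α e)⁻¹ = M.α e := idem_inv hEidem
    have EGinv : M.α e * (g e)⁻¹ = M.α e := by
      have h8 := congrArg Inv.inv EG
      rw [mul_inv_rev', hEi] at h8
      exact h8
    have hfin : a * (g e)⁻¹ = a := by
      have h9 : a * (g e)⁻¹ = a * M.α e * (g e)⁻¹ := by rw [abs a _ ha]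
      rw [h9, mul_assoc, EGinv, abs a _ ha]
    rw [hfin]
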